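/- arXiv:1605.08670 — 6 statements merged into one kernel-verified Lean document; each statement's English description precedes it below -/
import Mathlib

section
/- Let p : ℝ → ℝ² be differentiable at φ₀. For u ∈ ℝ² define the moving-point trajectory x_u(φ) = p(φ) + R(φ)u. Then the derivative of x_u at φ₀ vanishes if and only if u = Q R(φ₀)⁻¹ p′(φ₀). In other words, for each value of φ₀ there is precisely one point u₀ = Q R(φ₀)⁻¹ p′(φ₀) of the moving plane whose velocity vector vanishes (the instantaneous pole of the motion). -/
/-- The Euclidean rotation of the plane by angle `θ`:
`(x, y) ↦ (x cos θ - y sin θ, x sin θ + y cos θ)`. -/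
noncomputable def rot (θ : ℝ) (v : EuclideanSpace ℝ (Fin 2)) : EuclideanSpace ℝ (Fin 2) :=
  (WithLp.equiv 2 (Fin 2 → ℝ)).symm
    ![v 0 * Real.cos θ - v 1 * Real.sin θ, v 0 * Real.sin θ + v 1 * Real.cos θ]

/-- The quarter-turn `Q = R(π/2)`, i.e. `(x, y) ↦ (-y, x)`. -/
noncomputable def Qrot (v : EuclideanSpace ℝ (Fin 2)) : EuclideanSpace ℝ (Fin 2) :=
  (WithLp.equiv 2 (Fin 2 → ℝ)).symm ![-(v 1), v 0]

/-- Let `p : ℝ → ℝ²` be differentiable at `φ₀`, with derivative `p'`.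
For `u ∈ ℝ²` let `x_u (φ) = p (φ) + R(φ) u`. Then the derivative of `x_u` at `φ₀`
vanishes if and only if `u = Q R(φ₀)⁻¹ p'`, i.e. there is precisely one point of the
moving plane (the instantaneous pole) whose velocity vector vanishes. -/
theorem instantaneous_pole (p : ℝ → EuclideanSpace ℝ (Fin 2))
    (p' : EuclideanSpace ℝ (Fin 2)) (φ₀ : ℝ) (hp : HasDerivAt p p' φ₀)
    (u : EuclideanSpace ℝ (Fin 2)) :
    deriv (fun φ => p φ + rot φ u) φ₀ = 0 ↔ u = Qrot (rot (-φ₀) p') := by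
  set e0 : EuclideanSpace ℝ (Fin 2) := EuclideanSpace.single (0 : Fin 2) (1:ℝ) with he0
  set e1 : EuclideanSpace ℝ (Fin 2) := EuclideanSpace.single (1 : Fin 2) (1:ℝ) with he1
  have h0 : HasDerivAt (fun φ : ℝ => u 0 * Real.cos φ - u 1 * Real.sin φ)
      (-(u 0 * Real.sin φ₀) - u 1 * Real.cos φ₀) φ₀ := by
    simpa [mul_comm, Pi.sub_def] using (((Real.hasDerivAt_cos φ₀).const_mul (u 0)).sub
      ((Real.hasDerivAt_sin φ₀).const_mul (u 1)))
  have h1 : HasDerivAt (fun φ : ℝ => u 0 * Real.sin φ + u 1 * Real.cos φ)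
      (u 0 * Real.cos φ₀ - u 1 * Real.sin φ₀) φ₀ := by
    simpa [mul_comm, sub_eq_add_neg, Pi.add_def] using (((Real.hasDerivAt_sin φ₀).const_mul (u 0)).add
      ((Real.hasDerivAt_cos φ₀).const_mul (u 1)))
  have hrot : HasDerivAt (fun φ => rot φ u)
      ((-(u 0 * Real.sin φ₀) - u 1 * Real.cos φ₀) • e0
        + (u 0 * Real.cos φ₀ - u 1 * Real.sin φ₀) • e1) φ₀ := by
    have := (h0.smul_const e0).add (h1.smul_const e1)
    have hfun : (fun φ => rot φ u)
        = fun φ => (u 0 * Real.cos φ - u 1 * Real.sin φ) • e0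
            + (u 0 * Real.sin φ + u 1 * Real.cos φ) • e1 := by
      funext φ
      ext i
      fin_cases i <;> simp [rot, he0, he1, EuclideanSpace.single_apply]
    rw [hfun]
    exact this
  have hderiv : deriv (fun φ => p φ + rot φ u) φ₀
      = p' + ((-(u 0 * Real.sin φ₀) - u 1 * Real.cos φ₀) • e0
        + (u 0 * Real.cos φ₀ - u 1 * Real.sin φ₀) • e1) := (hp.add hrot).deriv
  rw [hderiv]
  have hid : Real.cos φ₀ ^ 2 + Real.sin φ₀ ^ 2 = 1 := Real.cos_sq_add_sin_sq φ₀
  constructor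
  · intro h
    have hc0 : p' 0 + (-(u 0 * Real.sin φ₀) - u 1 * Real.cos φ₀) = 0 := by
      have := congrArg (fun v : EuclideanSpace ℝ (Fin 2) => v 0) h
      simpa [he0, he1, EuclideanSpace.single_apply] using this
    have hc1 : p' 1 + (u 0 * Real.cos φ₀ - u 1 * Real.sin φ₀) = 0 := by
      have := congrArg (fun v : EuclideanSpace ℝ (Fin 2) => v 1) h
      simpa [he0, he1, EuclideanSpace.single_apply] using this
    ext i
    fin_cases i
    · simp [Qrot, rot, Real.cos_neg, Real.sin_neg]
      linear_combination -Real.sin φ₀ * hc0 + Real.cos φ₀ * hc1 - u 0 * hid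
    · simp [Qrot, rot, Real.cos_neg, Real.sin_neg]
      linear_combination -Real.cos φ₀ * hc0 - Real.sin φ₀ * hc1 - u 1 * hid
  · intro h
    rw [h]
    ext i
    fin_cases i
    · simp [Qrot, rot, Real.cos_neg, Real.sin_neg, he0, he1, EuclideanSpace.single_apply]
      linear_combination -p' 0 * hid
    · simp [Qrot, rot, Real.cos_neg, Real.sin_neg, he0, he1, EuclideanSpace.single_apply]
      linear_combination -p' 1 * hid
end

section
/- Let p : ℝ → ℝ² be differentiable at φ₀, let u ∈ ℝ², and set x_u(φ) = p(φ) + R(φ)u and x₀(φ) = p(φ) + Q p′(φ) (the instantaneous center in the fixed plane). Then the velocity satisfies x_u′(φ₀) = Q(x_u(φ₀) − x₀(φ₀)); in particular, the velocity vector of the motion at the point x_u(φ₀) is Euclidean-orthogonal to the vector from the instantaneous center x₀(φ₀) to x_u(φ₀), so the moving system is at that moment an instantaneous rotation about x₀(φ₀). -/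
lemma rot_eq (θ : ℝ) (u : EuclideanSpace ℝ (Fin 2)) :
    rot θ u = Real.cos θ • u + Real.sin θ • Qrot u := by
  ext i
  fin_cases i <;> simp [rot, Qrot, WithLp.equiv_symm_apply, PiLp.toLp_apply, Matrix.cons_val_zero, Matrix.cons_val_one, Matrix.head_cons, PiLp.add_apply, PiLp.sub_apply] <;> ring

lemma Qrot_rot (θ : ℝ) (u : EuclideanSpace ℝ (Fin 2)) :
    Qrot (rot θ u) = (-Real.sin θ) • u + Real.cos θ • Qrot u := by
  ext i
  fin_cases i <;> simp [rot, Qrot, WithLp.equiv_symm_apply, PiLp.toLp_apply, Matrix.cons_val_zero, Matrix.cons_val_one, Matrix.head_cons, PiLp.add_apply, PiLp.sub_apply] <;> ring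

lemma hasDerivAt_rot (u : EuclideanSpace ℝ (Fin 2)) (φ₀ : ℝ) :
    HasDerivAt (fun φ => rot φ u) (Qrot (rot φ₀ u)) φ₀ := by
  have h1 : HasDerivAt (fun φ : ℝ => Real.cos φ • u + Real.sin φ • Qrot u)
      ((-Real.sin φ₀) • u + Real.cos φ₀ • Qrot u) φ₀ :=
    ((Real.hasDerivAt_cos φ₀).smul_const u).add
      ((Real.hasDerivAt_sin φ₀).smul_const (Qrot u))
  simp only [← rot_eq] at h1
  rw [Qrot_rot]
  exact h1

/-- Let `p : ℝ → ℝ²` be differentiable at `φ₀` with derivative `p'`,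
let `u ∈ ℝ²`, and set `x_u (φ) = p (φ) + R(φ) u` and `x₀ (φ₀) = p (φ₀) + Q p'` (the
instantaneous center in the fixed plane). Then `x_u' (φ₀) = Q (x_u (φ₀) - x₀ (φ₀))`:
the velocity at `x_u (φ₀)` is orthogonal to the vector from the instantaneous center,
so at that moment the motion is an instantaneous rotation about `x₀ (φ₀)`. -/
theorem velocity_orthogonal_to_instantaneous_center
    (p : ℝ → EuclideanSpace ℝ (Fin 2)) (p' : EuclideanSpace ℝ (Fin 2)) (φ₀ : ℝ)
    (hp : HasDerivAt p p' φ₀) (u : EuclideanSpace ℝ (Fin 2)) :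
    HasDerivAt (fun φ => p φ + rot φ u)
      (Qrot ((p φ₀ + rot φ₀ u) - (p φ₀ + Qrot p'))) φ₀ ∧
    inner ℝ (Qrot ((p φ₀ + rot φ₀ u) - (p φ₀ + Qrot p')))
        ((p φ₀ + rot φ₀ u) - (p φ₀ + Qrot p')) = (0 : ℝ) := by
  constructor
  · have h := hp.add (hasDerivAt_rot u φ₀)
    have heq : Qrot ((p φ₀ + rot φ₀ u) - (p φ₀ + Qrot p')) = p' + Qrot (rot φ₀ u) := by
      ext i; fin_cases i <;> simp [rot, Qrot, WithLp.equiv_symm_apply, PiLp.toLp_apply, Matrix.cons_val_zero, Matrix.cons_val_one, Matrix.head_cons, PiLp.add_apply, PiLp.sub_apply] <;> ring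
    rw [heq]; exact h
  · set v := (p φ₀ + rot φ₀ u) - (p φ₀ + Qrot p')
    have : inner ℝ (Qrot v) v = (0 : ℝ) := by
      simp [Qrot, PiLp.inner_apply, Fin.sum_univ_two, WithLp.equiv_symm_apply, PiLp.toLp_apply, Matrix.cons_val_zero, Matrix.cons_val_one, Matrix.head_cons, PiLp.add_apply, PiLp.sub_apply]
      ring
    exact this
end

section
/- Let p : ℝ → ℝ² be twice differentiable at φ. Define the moving polode u₀(φ) = Q R(φ)⁻¹ p′(φ) and the fixed polode x₀(φ) = p(φ) + Q p′(φ). Then R(φ) u₀′(φ) = x₀′(φ); in particular the Euclidean speeds ‖u₀′(φ)‖ and ‖x₀′(φ)‖ of the two polodes agree, so their arc-length elements coincide and the moving polode rolls without slipping on the fixed polode. -/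
lemma key (φ : ℝ) (f : ℝ → EuclideanSpace ℝ (Fin 2)) (v : EuclideanSpace ℝ (Fin 2))
    (h : ∀ i, HasDerivAt (fun t => f t i) (v i) φ) : HasDerivAt f v φ := by
  have := ((EuclideanSpace.equiv (Fin 2) ℝ).symm.toContinuousLinearMap.hasFDerivAt).comp_hasDerivAt
    φ (hasDerivAt_pi.mpr h)
  exact this


/-- Let `p : ℝ → ℝ²` be (twice) differentiable, with derivative
function `p'` which is differentiable at `φ`. Define the moving polode
`u₀ (φ) = Q R(φ)⁻¹ p' (φ)` and the fixed polode `x₀ (φ) = p (φ) + Q p' (φ)`.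
Then `R(φ) u₀' (φ) = x₀' (φ)`; in particular the Euclidean speeds of the two polodes
agree, so the moving polode rolls without slipping on the fixed polode. -/
theorem polodes_roll_without_slipping
    (p p' : ℝ → EuclideanSpace ℝ (Fin 2)) (p'' : EuclideanSpace ℝ (Fin 2)) (φ : ℝ)
    (hp : ∀ t, HasDerivAt p (p' t) t) (hp' : HasDerivAt p' p'' φ) :
    rot φ (deriv (fun t => Qrot (rot (-t) (p' t))) φ)
        = deriv (fun t => p t + Qrot (p' t)) φ ∧
      ‖deriv (fun t => Qrot (rot (-t) (p' t))) φ‖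
        = ‖deriv (fun t => p t + Qrot (p' t)) φ‖ := by
  have hpi : ∀ i, HasDerivAt (fun s => p s i) (p' φ i) φ := by
    intro i
    have := ((EuclideanSpace.proj i : EuclideanSpace ℝ (Fin 2) →L[ℝ] ℝ)).hasFDerivAt.comp_hasDerivAt φ (hp φ)
    exact this
  have hp'i : ∀ i, HasDerivAt (fun s => p' s i) (p'' i) φ := by
    intro i
    have := ((EuclideanSpace.proj i : EuclideanSpace ℝ (Fin 2) →L[ℝ] ℝ)).hasFDerivAt.comp_hasDerivAt φ hp'
    exact this
  have hsin : HasDerivAt Real.sin (Real.cos φ) φ := Real.hasDerivAt_sin φ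
  have hcos : HasDerivAt Real.cos (-Real.sin φ) φ := Real.hasDerivAt_cos φ
  set U : EuclideanSpace ℝ (Fin 2) := (WithLp.equiv 2 (Fin 2 → ℝ)).symm
    ![p'' 0 * Real.sin φ + p' φ 0 * Real.cos φ - (p'' 1 * Real.cos φ + p' φ 1 * (-Real.sin φ)),
      p'' 0 * Real.cos φ + p' φ 0 * (-Real.sin φ) + (p'' 1 * Real.sin φ + p' φ 1 * Real.cos φ)]
    with hU
  set X : EuclideanSpace ℝ (Fin 2) := (WithLp.equiv 2 (Fin 2 → ℝ)).symm
    ![p' φ 0 - p'' 1, p' φ 1 + p'' 0] with hX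
  have hu : HasDerivAt (fun t => Qrot (rot (-t) (p' t))) U φ := by
    apply key
    have h0 : HasDerivAt (fun t => Qrot (rot (-t) (p' t)) 0) (U 0) φ := by
      have he : (fun t => Qrot (rot (-t) (p' t)) 0)
          = fun t => p' t 0 * Real.sin t - p' t 1 * Real.cos t := by
        funext t
        simp [Qrot, rot, WithLp.equiv_symm_apply, PiLp.toLp_apply]
        ring
      rw [he]
      have := ((hp'i 0).mul hsin).sub ((hp'i 1).mul hcos)
      convert this using 1
      all_goals rfl
    have h1 : HasDerivAt (fun t => Qrot (rot (-t) (p' t)) 1) (U 1) φ := by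
      have he : (fun t => Qrot (rot (-t) (p' t)) 1)
          = fun t => p' t 0 * Real.cos t + p' t 1 * Real.sin t := by
        funext t
        simp [Qrot, rot, WithLp.equiv_symm_apply, PiLp.toLp_apply]
      rw [he]
      have := ((hp'i 0).mul hcos).add ((hp'i 1).mul hsin)
      convert this using 1
      all_goals rfl
    intro i
    fin_cases i
    · exact h0
    · exact h1
  have hx : HasDerivAt (fun t => p t + Qrot (p' t)) X φ := by
    apply key
    have h0 : HasDerivAt (fun t => (p t + Qrot (p' t)) 0) (X 0) φ := by
      have he : (fun t => (p t + Qrot (p' t)) 0) = fun t => p t 0 - p' t 1 := by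
        funext t
        simp [Qrot, WithLp.equiv_symm_apply, PiLp.toLp_apply]
        ring
      rw [he]
      have := (hpi 0).sub (hp'i 1)
      convert this using 1
      all_goals rfl
    have h1 : HasDerivAt (fun t => (p t + Qrot (p' t)) 1) (X 1) φ := by
      have he : (fun t => (p t + Qrot (p' t)) 1) = fun t => p t 1 + p' t 0 := by
        funext t
        simp [Qrot, WithLp.equiv_symm_apply, PiLp.toLp_apply]
      rw [he]
      have := (hpi 1).add (hp'i 0)
      convert this using 1
      all_goals rfl
    intro i
    fin_cases i
    · exact h0
    · exact h1
  rw [hu.deriv, hx.deriv]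
  constructor
  · ext i
    fin_cases i
    · simp only [rot, hU, hX, WithLp.equiv_symm_apply, PiLp.toLp_apply, Matrix.cons_val_zero,
        Matrix.cons_val_one, Matrix.head_cons, Fin.zero_eta, Fin.mk_one, Fin.isValue]
      linear_combination (p' φ 0 - p'' 1) * Real.sin_sq_add_cos_sq φ
    · simp only [rot, hU, hX, WithLp.equiv_symm_apply, PiLp.toLp_apply, Matrix.cons_val_zero,
        Matrix.cons_val_one, Matrix.head_cons, Fin.zero_eta, Fin.mk_one, Fin.isValue]
      linear_combination (p'' 0 + p' φ 1) * Real.sin_sq_add_cos_sq φ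
  · rw [EuclideanSpace.norm_eq, EuclideanSpace.norm_eq]
    congr 1
    simp [Fin.sum_univ_two, hU, hX, WithLp.equiv_symm_apply, PiLp.toLp_apply, Real.norm_eq_abs, sq_abs]
    nlinarith [Real.sin_sq_add_cos_sq φ, sq_nonneg (Real.sin φ), sq_nonneg (Real.cos φ)]
end

section
/- Let X be a real normed space, let c > 0, and let f : ℝ → X be differentiable at t₀ with ‖f(t)‖ = c for all t in a neighborhood of t₀. Then the velocity vector f′(t₀) is tangent to the sphere of radius c, and the position vector f(t₀) is Birkhoff orthogonal to f′(t₀): for every r ∈ ℝ one has ‖f(t₀)‖ ≤ ‖f(t₀) + r · f′(t₀)‖. -/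
/-- Let `X` be a real normed space, `c > 0`, and `f : ℝ → X`
differentiable at `t₀` with `‖f t‖ = c` for all `t` in a neighborhood of `t₀`.
Then the position vector `f t₀` is Birkhoff orthogonal to the velocity vector
`f' (t₀)`: for every `r ∈ ℝ`, `‖f t₀‖ ≤ ‖f t₀ + r • f' (t₀)‖`. -/
theorem birkhoff_orthogonal_tangent (X : Type*) [NormedAddCommGroup X]
    [NormedSpace ℝ X] (c : ℝ) (hc : 0 < c) (f : ℝ → X) (f' : X) (t₀ : ℝ)
    (hf : HasDerivAt f f' t₀) (hnorm : ∀ᶠ t in nhds t₀, ‖f t‖ = c) :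
    ∀ r : ℝ, ‖f t₀‖ ≤ ‖f t₀ + r • f'‖ := by
  intro r
  have hft₀ : ‖f t₀‖ = c := hnorm.self_of_nhds
  rcases eq_or_ne r 0 with hr | hr
  · simp [hr]
  by_contra hlt
  push_neg at hlt
  rw [hft₀] at hlt
  set δ : ℝ := c - ‖f t₀ + r • f'‖ with hδ
  have hδpos : 0 < δ := by rw [hδ]; linarith
  -- little-o estimate with ε = δ/(2|r|)
  have hε : 0 < δ / (2 * |r|) := by positivity
  have hO := (hf.isLittleO).bound hε
  have hall := (hO.and hnorm).exists_mem
  rcases hall with ⟨U, hU, hUall⟩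
  rcases Metric.mem_nhds_iff.mp hU with ⟨η, hη, hηU⟩
  -- choose s small
  set s : ℝ := min (1 : ℝ) (η / (2 * |r|)) with hs
  have hspos : 0 < s := lt_min one_pos (by positivity)
  have hs1 : s ≤ 1 := min_le_left _ _
  set t : ℝ := t₀ + s * r with ht
  have htU : t ∈ U := by
    apply hηU
    simp only [Metric.mem_ball, Real.dist_eq, ht]
    have : |t₀ + s * r - t₀| = s * |r| := by
      rw [add_sub_cancel_left, abs_mul, abs_of_pos hspos]
    rw [this]
    have : s ≤ η / (2 * |r|) := min_le_right _ _
    have h2 : s * |r| ≤ (η / (2 * |r|)) * |r| := by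
      apply mul_le_mul_of_nonneg_right this (abs_nonneg _)
    have hrabs : 0 < |r| := abs_pos.mpr hr
    calc s * |r| ≤ (η / (2 * |r|)) * |r| := h2
      _ = η / 2 := by field_simp
      _ < η := by linarith
  obtain ⟨hbound, hft⟩ := hUall t htU
  -- hbound : ‖f t - f t₀ - (t - t₀) • f'‖ ≤ δ/(2|r|) * ‖t - t₀‖
  have htt₀ : t - t₀ = s * r := by rw [ht]; ring
  have hnorm_tt : ‖t - t₀‖ = s * |r| := by
    rw [htt₀, Real.norm_eq_abs, abs_mul, abs_of_pos hspos]
  -- lower bound: ‖f t₀ + (s*r) • f'‖ ≥ c - s*δ/2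
  have hlow : c - s * δ / 2 ≤ ‖f t₀ + (s * r) • f'‖ := by
    have h1 : ‖f t‖ - ‖f t - (f t₀ + (s * r) • f')‖ ≤ ‖f t₀ + (s * r) • f'‖ := by
      have := norm_sub_norm_le (f t) (f t - (f t₀ + (s * r) • f'))
      simpa using this
    have h2 : ‖f t - (f t₀ + (s * r) • f')‖ ≤ s * δ / 2 := by
      have heq : f t - (f t₀ + (s * r) • f') = f t - f t₀ - (t - t₀) • f' := by
        rw [htt₀]; abel
      rw [heq]
      have hbound' : ‖f t - f t₀ - (t - t₀) • f'‖ ≤ δ / (2 * |r|) * ‖t - t₀‖ := by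
        simpa using hbound
      calc ‖f t - f t₀ - (t - t₀) • f'‖ ≤ δ / (2 * |r|) * ‖t - t₀‖ := hbound'
        _ = δ / (2 * |r|) * (s * |r|) := by rw [hnorm_tt]
        _ = s * δ / 2 := by
            have hrabs : (|r| : ℝ) ≠ 0 := abs_ne_zero.mpr hr
            field_simp
    rw [hft] at h1
    linarith
  -- upper bound via convexity
  have hupper : ‖f t₀ + (s * r) • f'‖ ≤ c - s * δ := by
    have : f t₀ + (s * r) • f' = (1 - s) • f t₀ + s • (f t₀ + r • f') := by
      rw [smul_add, smul_smul]
      module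
    rw [this]
    calc ‖(1 - s) • f t₀ + s • (f t₀ + r • f')‖
        ≤ ‖(1 - s) • f t₀‖ + ‖s • (f t₀ + r • f')‖ := norm_add_le _ _
      _ = (1 - s) * c + s * ‖f t₀ + r • f'‖ := by
          rw [norm_smul, norm_smul, Real.norm_eq_abs, Real.norm_eq_abs,
            abs_of_nonneg (by linarith : (0:ℝ) ≤ 1 - s), abs_of_pos hspos, hft₀]
      _ = c - s * δ := by rw [hδ]; ring
  nlinarith [hspos, hδpos]
end

section
/- Let X be a two-dimensional real normed space (a Minkowski plane) such that for every pair of distinct unit vectors x, y ∈ X the vector x + y is Birkhoff orthogonal to x − y, i.e. ‖(x + y) + t(x − y)‖ ≥ ‖x + y‖ for all t ∈ ℝ. Then X is Euclidean: the norm satisfies the parallelogram law ‖u + v‖² + ‖u − v‖² = 2‖u‖² + 2‖v‖² for all u, v ∈ X (equivalently, the norm is induced by an inner product). -/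
set_option maxHeartbeats 1000000
open Real Set
section BTsec
variable {X : Type*} [NormedAddCommGroup X] [NormedSpace ℝ X]

lemma BT_line_convex (c d : X) (a b l : ℝ) (h0 : 0 ≤ l) (h1 : l ≤ 1) :
    ‖c + (l*a + (1-l)*b) • d‖ ≤ l * ‖c + a • d‖ + (1-l) * ‖c + b • d‖ := by
  have e : c + (l*a + (1-l)*b) • d = l • (c + a • d) + (1-l) • (c + b • d) := by
    match_scalars <;> ring
  rw [e]
  refine (norm_add_le _ _).trans ?_
  rw [norm_smul, norm_smul, Real.norm_of_nonneg h0, Real.norm_of_nonneg (by linarith)]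


/-- On the circle through `p` in the plane spanned by `p, w` there is a unit vector
isosceles-orthogonal to `p`. -/
lemma BT_exists_isosceles (p w : X) (hp : ‖p‖ = 1)
    (hnz : ∀ θ : ℝ, Real.cos θ • p + Real.sin θ • w ≠ 0) :
    ∃ q : X, ‖q‖ = 1 ∧ ‖p + q‖ = ‖p - q‖ ∧ ∃ a b : ℝ, q = a • p + b • w := by
  set g : ℝ → X := fun θ => Real.cos θ • p + Real.sin θ • w with hg
  have hgc : Continuous g := by fun_prop
  have hn : ∀ θ, ‖g θ‖ ≠ 0 := fun θ => norm_ne_zero_iff.2 (hnz θ)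
  set f : ℝ → ℝ := fun θ => ‖p + ‖g θ‖⁻¹ • g θ‖ - ‖p - ‖g θ‖⁻¹ • g θ‖ with hf
  have hfc : Continuous f := by
    apply Continuous.sub <;> apply Continuous.norm
    · exact continuous_const.add ((hgc.norm.inv₀ hn).smul hgc)
    · exact continuous_const.sub ((hgc.norm.inv₀ hn).smul hgc)
  have hg0 : g 0 = p := by simp [hg]
  have hgpi : g π = -p := by simp [hg]
  have h0 : f 0 = 2 := by
    simp only [hf, hg0, hp, inv_one, one_smul, sub_self, norm_zero]
    rw [← two_smul ℝ p, norm_smul, hp]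
    norm_num
  have hpi : f π = -2 := by
    simp only [hf, hgpi, norm_neg, hp, inv_one, one_smul, add_neg_cancel, norm_zero,
      sub_neg_eq_add]
    rw [← two_smul ℝ p, norm_smul, hp]
    norm_num
  have hmem : (0:ℝ) ∈ Icc (f π) (f 0) := by rw [h0, hpi]; constructor <;> norm_num
  obtain ⟨θ, hθmem, hθ⟩ := intermediate_value_Icc' (le_of_lt Real.pi_pos) hfc.continuousOn hmem
  refine ⟨‖g θ‖⁻¹ • g θ, ?_, ?_, ⟨‖g θ‖⁻¹ * Real.cos θ, ‖g θ‖⁻¹ * Real.sin θ, ?_⟩⟩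
  · rw [norm_smul, norm_inv, norm_norm, inv_mul_cancel₀ (hn θ)]
  · have : f θ = 0 := hθ
    simpa [hf, sub_eq_zero] using this
  · rw [hg]; dsimp only; rw [smul_add, smul_smul, smul_smul]

lemma BT_eps_bound (mm A B ε : ℝ) (hmm0 : 0 < mm) (hA : 0 < A) (hB : 0 ≤ B)
    (hε0 : 0 < ε) (hε12 : ε ≤ 1/2) (h2 : ε * (2*B+1) ≤ mm*A) :
    ε * B < mm * (A * (1-ε)) := by
  nlinarith [mul_nonneg (mul_nonneg hmm0.le hA.le) (show (0:ℝ) ≤ 1/2 - ε by linarith)]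

/-- No flat spots on the unit sphere: strict convexity. -/
lemma BT_strict_conv
    (hIB : ∀ p q : X, ‖p + q‖ = ‖p - q‖ → ∀ t : ℝ, ‖p‖ ≤ ‖p + t • q‖)
    (hiso : ∀ (p w : X), ‖p‖ = 1 →
      (∀ θ : ℝ, Real.cos θ • p + Real.sin θ • w ≠ 0) →
      ∃ q : X, ‖q‖ = 1 ∧ ‖p + q‖ = ‖p - q‖ ∧ ∃ a b : ℝ, q = a • p + b • w)
    (u₁ u₂ : X) (h1 : ‖u₁‖ = 1) (h2 : ‖u₂‖ = 1) (hs : ‖u₁ + u₂‖ = 2) : u₁ = u₂ := by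
  by_contra hne
  have hd : u₂ - u₁ ≠ 0 := sub_ne_zero.2 (Ne.symm hne)
  set nd : ℝ := ‖u₂ - u₁‖ with hnd
  have hnd0 : 0 < nd := norm_pos_iff.2 hd
  set d : X := nd⁻¹ • (u₂ - u₁) with hdd
  have hdn : ‖d‖ = 1 := by
    rw [hdd, norm_smul, norm_inv, norm_norm, ← hnd, inv_mul_cancel₀ (ne_of_gt hnd0)]
  have hd0 : d ≠ 0 := by intro h0; rw [h0] at hdn; simp at hdn
  set c : X := (2:ℝ)⁻¹ • (u₁ + u₂) with hc
  have hcn : ‖c‖ = 1 := by rw [hc, norm_smul, hs]; norm_num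
  set G : ℝ → ℝ := fun s => ‖c + s • d‖ with hG
  have hGc : Continuous G := by fun_prop
  have hG0 : G 0 = 1 := by simp [hG, hcn]
  have hGconv : ∀ a b l : ℝ, 0 ≤ l → l ≤ 1 → G (l*a + (1-l)*b) ≤ l * G a + (1-l) * G b :=
    fun a b l h0 h1 => BT_line_convex c d a b l h0 h1
  have hGabs : ∀ s, |s| - 1 ≤ G s := by
    intro s
    have : ‖s • d‖ - ‖c‖ ≤ ‖c + s • d‖ := by
      have := norm_sub_le (c + s • d) c
      simp only [add_sub_cancel_left] at this
      linarith [this]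
    rw [norm_smul, hdn, hcn, Real.norm_eq_abs] at this
    simpa using this
  set s₁ : ℝ := nd / 2 with hs₁
  have hs₁0 : 0 < s₁ := by positivity
  have hu₁ : u₁ = c + (-s₁) • d := by
    rw [hc, hdd, smul_smul]
    have : -s₁ * nd⁻¹ = -(1/2) := by rw [hs₁]; field_simp
    rw [this]; module
  have hu₂ : u₂ = c + s₁ • d := by
    rw [hc, hdd, smul_smul]
    have : s₁ * nd⁻¹ = 1/2 := by rw [hs₁]; field_simp
    rw [this]; module
  have hGs₁ : G s₁ = 1 := by rw [hG]; dsimp only; rw [← hu₂]; exact h2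
  have hGms₁ : G (-s₁) = 1 := by rw [hG]; dsimp only; rw [← hu₁]; exact h1
  have hGge1 : ∀ s, 1 ≤ G s := by
    intro s
    by_contra hlt
    push_neg at hlt
    rcases le_or_gt 0 s with hs0 | hs0
    · set l : ℝ := s/(s+s₁) with hl
      have hls : 0 < s + s₁ := by linarith
      have hl0 : 0 ≤ l := by rw [hl]; exact div_nonneg hs0 hls.le
      have hl1 : l < 1 := by rw [hl, div_lt_one hls]; linarith
      have hzero : l*(-s₁) + (1-l)*s = 0 := by rw [hl]; field_simp; ring
      have hle := hGconv (-s₁) s l hl0 (le_of_lt hl1)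
      rw [hzero, hG0, hGms₁] at hle
      have := mul_lt_mul_of_pos_left hlt (show (0:ℝ) < 1 - l by linarith)
      linarith
    · set l : ℝ := s₁/(s₁-s) with hl
      have hls : 0 < s₁ - s := by linarith
      have hl0 : 0 < l := by rw [hl]; exact div_pos hs₁0 hls
      have hl1 : l ≤ 1 := by rw [hl, div_le_one hls]; linarith
      have hzero : l*s + (1-l)*s₁ = 0 := by rw [hl]; field_simp; ring
      have hle := hGconv s s₁ l (le_of_lt hl0) hl1
      rw [hzero, hG0, hGs₁] at hle
      have := mul_lt_mul_of_pos_left hlt hl0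
      linarith
  set S : Set ℝ := {s | G s = 1} with hS
  have hSclosed : IsClosed S := isClosed_eq hGc continuous_const
  have hSne : S.Nonempty := ⟨0, hG0⟩
  have hSbdd : ∀ s ∈ S, |s| ≤ 2 := by
    intro s hsS
    have := hGabs s
    rw [show G s = 1 from hsS] at this
    linarith
  have hSbddA : BddAbove S := ⟨2, fun s hsS => (abs_le.1 (hSbdd s hsS)).2⟩
  have hSbddB : BddBelow S := ⟨-2, fun s hsS => (abs_le.1 (hSbdd s hsS)).1⟩
  set R : ℝ := sSup S with hR
  set L : ℝ := sInf S with hL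
  have hRS : R ∈ S := hSclosed.csSup_mem hSne hSbddA
  have hLS : L ∈ S := hSclosed.csInf_mem hSne hSbddB
  have hGR : G R = 1 := hRS
  have hGL : G L = 1 := hLS
  have hs₁R : s₁ ≤ R := le_csSup hSbddA hGs₁
  have hms₁L : L ≤ -s₁ := csInf_le hSbddB hGms₁
  have hLR : L < R := by linarith
  have plateau : ∀ s, L ≤ s → s ≤ R → G s = 1 := by
    intro s hLs hsR
    set l : ℝ := (R - s)/(R - L) with hl
    have hRL : 0 < R - L := by linarith
    have hl0 : 0 ≤ l := by rw [hl]; exact div_nonneg (by linarith) hRL.le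
    have hl1 : l ≤ 1 := by rw [hl, div_le_one hRL]; linarith
    have hzero : l*L + (1-l)*R = s := by rw [hl]; field_simp; ring
    have hle := hGconv L R l hl0 hl1
    rw [hzero, hGL, hGR] at hle
    have := hGge1 s
    linarith
  have hGgt : ∀ s, R < s → 1 < G s := by
    intro s hRs
    rcases lt_or_eq_of_le (hGge1 s) with h | h
    · exact h
    · exact absurd (le_csSup hSbddA h.symm) (not_le.2 hRs)
  have hGgt' : ∀ s, s < L → 1 < G s := by
    intro s hsL
    rcases lt_or_eq_of_le (hGge1 s) with h | h
    · exact h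
    · exact absurd (csInf_le hSbddB h.symm) (not_le.2 hsL)
  have monoR : ∀ s s', R ≤ s → s < s' → G s < G s' := by
    intro s s' hRs hss'
    have hGs' : 1 < G s' := hGgt s' (by linarith)
    set l : ℝ := (s' - s)/(s' - L) with hl
    have hsL : 0 < s' - L := by linarith
    have hl0 : 0 < l := by rw [hl]; exact div_pos (by linarith) hsL
    have hl1 : l ≤ 1 := by rw [hl, div_le_one hsL]; linarith
    have hzero : l*L + (1-l)*s' = s := by rw [hl]; field_simp; ring
    have hle := hGconv L s' l (le_of_lt hl0) hl1
    rw [hzero, hGL] at hle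
    have := mul_lt_mul_of_pos_left hGs' hl0
    linarith
  have monoL : ∀ s s', s < s' → s' ≤ L → G s' < G s := by
    intro s s' hss' hs'L
    have hGs : 1 < G s := hGgt' s (by linarith)
    set l : ℝ := (s' - s)/(R - s) with hl
    have hsR : 0 < R - s := by linarith
    have hl0 : 0 < l := by rw [hl]; exact div_pos (by linarith) hsR
    have hl1 : l ≤ 1 := by rw [hl, div_le_one hsR]; linarith
    have hzero : l*R + (1-l)*s = s' := by rw [hl]; field_simp; ring
    have hle := hGconv R s l (le_of_lt hl0) hl1
    rw [hzero, hGR] at hle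
    have := mul_lt_mul_of_pos_left hGs hl0
    linarith
  have hRL2 : R - L ≤ 2 := by
    have h_ : ‖(c + R • d) - (c + L • d)‖ ≤ ‖c + R • d‖ + ‖c + L • d‖ := norm_sub_le _ _
    have e : (c + R • d) - (c + L • d) = (R - L) • d := by module
    rw [e, norm_smul, hdn, Real.norm_eq_abs, mul_one] at h_
    have h2_ : |R - L| ≤ 2 := by
      have : ‖c + R • d‖ = 1 := hGR
      have : ‖c + L • d‖ = 1 := hGL
      calc |R - L| ≤ ‖c + R • d‖ + ‖c + L • d‖ := h_
        _ = 2 := by rw [show ‖c + R • d‖ = 1 from hGR, show ‖c + L • d‖ = 1 from hGL]; norm_num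
    exact (abs_le.1 h2_).2
  have hbad : ∃ s, L < s ∧ s < R ∧ G (s+1) ≠ G (s-1) := by
    by_contra hcon
    push_neg at hcon
    rcases eq_or_lt_of_le hRL2 with hRL2e | hRL2s
    · obtain ⟨s, hsa, hsb⟩ := exists_between (show R-1 < R by linarith)
      have hsL : L < s := by linarith
      have hgt : 1 < G (s+1) := hGgt _ (by linarith)
      have heq : G (s-1) = 1 := plateau _ (by linarith) (by linarith)
      have := hcon s hsL hsb
      rw [heq] at this
      linarith
    · have hM : max L (R-1) < min R (L+1) := by
        rw [max_lt_iff, lt_min_iff, lt_min_iff]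
        exact ⟨⟨hLR, by linarith⟩, ⟨by linarith, by linarith⟩⟩
      obtain ⟨s, hsa, hsb⟩ := exists_between hM
      obtain ⟨s', hsa', hsb'⟩ := exists_between hsb
      have hsL : L < s := lt_of_le_of_lt (le_max_left _ _) hsa
      have hsR : s < R := lt_of_lt_of_le (by linarith) (min_le_left _ _)
      have hs'L : L < s' := by linarith
      have hs'R : s' < R := lt_of_lt_of_le hsb' (min_le_left _ _)
      have e1 : G (s+1) = G (s-1) := hcon s hsL hsR
      have e2 : G (s'+1) = G (s'-1) := hcon s' hs'L hs'R
      have hR1 : R - 1 < s := lt_of_le_of_lt (le_max_right _ _) hsa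
      have hL1 : s' < L + 1 := lt_of_lt_of_le hsb' (min_le_right _ _)
      have i1 : G (s+1) < G (s'+1) := monoR _ _ (by linarith) (by linarith)
      have i2 : G (s'-1) < G (s-1) := monoL _ _ (by linarith) (by linarith)
      linarith
  obtain ⟨t₀, ht₀L, ht₀R, hneq⟩ := hbad
  set p : X := c + t₀ • d with hpdef
  have hpn : ‖p‖ = 1 := plateau t₀ (le_of_lt ht₀L) (le_of_lt ht₀R)
  have hpd : ∀ k : ℝ, p ≠ k • d := by
    intro k hk
    have hcd : c = (k - t₀) • d := by
      rw [hpdef] at hk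
      have : c = k • d - t₀ • d := by rw [← hk]; module
      rw [this]; module
    have h1' : u₁ = (k - t₀ - s₁) • d := by rw [hu₁, hcd]; module
    have h2' : u₂ = (k - t₀ + s₁) • d := by rw [hu₂, hcd]; module
    have n1 : |k - t₀ - s₁| = 1 := by
      have := h1
      rw [h1', norm_smul, hdn, mul_one, Real.norm_eq_abs] at this
      exact this
    have n2 : |k - t₀ + s₁| = 1 := by
      have := h2
      rw [h2', norm_smul, hdn, mul_one, Real.norm_eq_abs] at this
      exact this
    have e : u₁ + u₂ = (2*(k - t₀)) • d := by rw [h1', h2']; module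
    have ns : |2*(k - t₀)| = 2 := by
      have := hs
      rw [e, norm_smul, hdn, mul_one, Real.norm_eq_abs] at this
      exact this
    rcases (abs_eq (by norm_num : (0:ℝ) ≤ 2)).1 ns with h | h <;>
      rcases (abs_eq (by norm_num : (0:ℝ) ≤ 1)).1 n1 with ha1 | ha1 <;>
      rcases (abs_eq (by norm_num : (0:ℝ) ≤ 1)).1 n2 with ha2 | ha2 <;> linarith
  have hnz : ∀ θ : ℝ, Real.cos θ • p + Real.sin θ • d ≠ 0 := by
    intro θ h
    by_cases hcos : Real.cos θ = 0
    · have hsin : Real.sin θ ≠ 0 := by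
        intro hsin
        have := Real.sin_sq_add_cos_sq θ
        rw [hsin, hcos] at this; norm_num at this
      rw [hcos, zero_smul, zero_add] at h
      exact hd0 ((smul_eq_zero.1 h).resolve_left hsin)
    · apply hpd (-Real.sin θ/Real.cos θ)
      have h' : Real.cos θ • p = (-Real.sin θ) • d := by
        rw [neg_smul]
        exact eq_neg_of_add_eq_zero_left h
      calc p = (Real.cos θ)⁻¹ • (Real.cos θ • p) := by
              rw [smul_smul, inv_mul_cancel₀ hcos, one_smul]
        _ = (Real.cos θ)⁻¹ • ((-Real.sin θ) • d) := by rw [h']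
        _ = (-Real.sin θ/Real.cos θ) • d := by rw [smul_smul]; congr 1; field_simp
  obtain ⟨q, hq1, hqI, a, b, hqab⟩ := hiso p d hpn hnz
  have hGp1 : ‖p + d‖ = G (t₀+1) := by
    rw [hG]; dsimp only; rw [hpdef]; congr 1; module
  have hGm1 : ‖p - d‖ = G (t₀-1) := by
    rw [hG]; dsimp only; rw [hpdef]; congr 1; module
  have ha : a ≠ 0 := by
    intro h0
    rw [h0, zero_smul, zero_add] at hqab
    have hb : |b| = 1 := by
      rw [hqab, norm_smul, hdn, mul_one, Real.norm_eq_abs] at hq1; exact hq1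
    rcases (abs_eq (by norm_num : (0:ℝ) ≤ 1)).1 hb with hb1 | hb1
    · rw [hb1, one_smul] at hqab
      rw [hqab, hGp1, hGm1] at hqI
      exact hneq hqI
    · rw [hb1, neg_one_smul] at hqab
      rw [hqab] at hqI
      rw [show p + -d = p - d by module, show p - -d = p + d by module] at hqI
      rw [hGp1, hGm1] at hqI
      exact hneq hqI.symm
  have hA : 0 < |a| := abs_pos.2 ha
  set mm : ℝ := min (t₀ - L) (R - t₀) with hmm
  have hmm0 : 0 < mm := lt_min (by linarith) (by linarith)
  set ε : ℝ := min (1/2) (mm * |a| / (2*|b| + 1)) with hε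
  have hεpos2 : 0 < mm * |a| / (2*|b| + 1) :=
    div_pos (mul_pos hmm0 hA) (by positivity)
  have hε0 : 0 < ε := lt_min (by norm_num) hεpos2
  have hε12 : ε ≤ 1/2 := min_le_left _ _
  have hε2 : ε ≤ mm * |a| / (2*|b| + 1) := min_le_right _ _
  have hε2' : ε * (2*|b| + 1) ≤ mm * |a| :=
    (le_div_iff₀ (by positivity : (0:ℝ) < 2*|b|+1)).1 hε2
  set t : ℝ := -ε/a with ht
  have h1ε : (0:ℝ) < 1 - ε := by linarith
  set δ : ℝ := t*b/(1-ε) with hδdef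
  have hta : t * a = -ε := by rw [ht]; field_simp
  have hδe : (1-ε) * δ = t * b := by rw [hδdef]; field_simp
  have hq' : q = a • c + (a*t₀ + b) • d := by rw [hqab, hpdef]; module
  have expand : p + t • q = (1-ε) • (c + (t₀ + δ) • d) := by
    rw [hpdef, hq', hδdef, ht]
    match_scalars <;> (field_simp; try ring)
  have hnorm : ‖p + t • q‖ = (1-ε) * G (t₀ + δ) := by
    rw [expand, norm_smul, Real.norm_of_nonneg (le_of_lt h1ε)]
  have habs : |δ| = ε * |b| / (|a| * (1-ε)) := by
    rw [hδdef, ht]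
    rw [abs_div, abs_of_pos h1ε, abs_mul, abs_div, abs_neg, abs_of_pos hε0]
    field_simp
  have hδbound : |δ| < mm := by
    rw [habs, div_lt_iff₀ (by positivity)]
    exact BT_eps_bound mm |a| |b| ε hmm0 hA (abs_nonneg b) hε0 hε12 hε2'
  have hin : G (t₀ + δ) = 1 := by
    have hab := abs_lt.1 hδbound
    have hm1 : mm ≤ t₀ - L := min_le_left _ _
    have hm2 : mm ≤ R - t₀ := min_le_right _ _
    exact plateau _ (by linarith) (by linarith)
  have hfin := hIB p q hqI t
  rw [hnorm, hin, hpn, mul_one] at hfin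
  linarith

/-- Core of homogeneity of isosceles orthogonality. -/
lemma BT_homog_core
    (hIB : ∀ p q : X, ‖p + q‖ = ‖p - q‖ → ∀ t : ℝ, ‖p‖ ≤ ‖p + t • q‖)
    (hSC : ∀ u₁ u₂ : X, ‖u₁‖ = 1 → ‖u₂‖ = 1 → ‖u₁ + u₂‖ = 2 → u₁ = u₂)
    (x y : X) (hx : x ≠ 0) (hy : y ≠ 0) (hxy : ‖x + y‖ = ‖x - y‖)
    (t : ℝ) (ht0 : 0 < t) (htb : t * ‖y‖ ≤ ‖x‖) : ‖x + t • y‖ = ‖x - t • y‖ := by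
  set F : ℝ → ℝ := fun α => ‖(1+α) • x + t • y‖ - ‖(1-α) • x - t • y‖ with hF
  have hFc : Continuous F := by fun_prop
  have hF1 : 0 ≤ F 1 := by
    have e1 : (1+(1:ℝ)) • x + t • y = (2:ℝ) • x + t • y := by norm_num
    have e2 : (1-(1:ℝ)) • x - t • y = -(t • y) := by
      rw [show (1-(1:ℝ)) = 0 by norm_num]; module
    have hlow : 2 * ‖x‖ - t * ‖y‖ ≤ ‖(2:ℝ) • x + t • y‖ := by
      have h_ := norm_sub_le ((2:ℝ) • x + t • y) (t • y)
      rw [add_sub_cancel_right] at h_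
      rw [norm_smul, norm_smul, Real.norm_ofNat, Real.norm_eq_abs, abs_of_pos ht0] at h_
      linarith
    rw [hF]; dsimp only
    rw [e1, e2, norm_neg, norm_smul, Real.norm_eq_abs, abs_of_pos ht0]
    linarith
  have hFm1 : F (-1) ≤ 0 := by
    have e1 : (1+(-1:ℝ)) • x + t • y = t • y := by
      rw [show (1+(-1:ℝ)) = 0 by norm_num]; module
    have e2 : (1-(-1:ℝ)) • x - t • y = (2:ℝ) • x - t • y := by norm_num
    have hlow : 2 * ‖x‖ - t * ‖y‖ ≤ ‖(2:ℝ) • x - t • y‖ := by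
      have h_ := norm_sub_le ((2:ℝ) • x) (t • y)
      have h2 := norm_sub_norm_le ((2:ℝ) • x) (t • y)
      rw [norm_smul, norm_smul, Real.norm_ofNat, Real.norm_eq_abs, abs_of_pos ht0] at h2
      linarith
    rw [hF]; dsimp only
    rw [e1, e2, norm_smul, Real.norm_eq_abs, abs_of_pos ht0]
    linarith
  have hmem : (0:ℝ) ∈ Icc (F (-1)) (F 1) := ⟨hFm1, hF1⟩
  obtain ⟨α, hαmem, hα⟩ :=
    intermediate_value_Icc (by norm_num : (-1:ℝ) ≤ 1) hFc.continuousOn hmem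
  have hFα : ‖(1+α) • x + t • y‖ = ‖(1-α) • x - t • y‖ := by
    have : F α = 0 := hα
    rw [hF] at this; dsimp only at this; linarith
  -- hIB on (t•y + α•x , x)
  have hpq : ‖(t • y + α • x) + x‖ = ‖(t • y + α • x) - x‖ := by
    have e1 : (t • y + α • x) + x = (1+α) • x + t • y := by module
    have e2 : (t • y + α • x) - x = -((1-α) • x - t • y) := by module
    rw [e1, e2, norm_neg, hFα]
  have hmin_α : ∀ s : ℝ, ‖t • y + α • x‖ ≤ ‖t • y + (α + s) • x‖ := by
    intro s
    have := hIB (t • y + α • x) x hpq s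
    have e : (t • y + α • x) + s • x = t • y + (α + s) • x := by module
    rw [e] at this
    exact this
  have hyx : ‖y + x‖ = ‖y - x‖ := by
    rw [add_comm, norm_sub_rev]
    exact hxy
  have hmin_0 : ∀ s : ℝ, t * ‖y‖ ≤ ‖t • y + s • x‖ := by
    intro s
    have := hIB y x hyx (s/t)
    have e : t • (y + (s/t) • x) = t • y + s • x := by
      rw [smul_add, smul_smul]
      congr 2
      field_simp
    calc t * ‖y‖ ≤ t * ‖y + (s/t) • x‖ := by
          exact mul_le_mul_of_nonneg_left this (le_of_lt ht0)
      _ = ‖t • (y + (s/t) • x)‖ := by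
          rw [norm_smul, Real.norm_eq_abs, abs_of_pos ht0]
      _ = ‖t • y + s • x‖ := by rw [e]
  -- α = 0
  have hα0 : α = 0 := by
    by_contra hα0
    set r : ℝ := t * ‖y‖ with hr
    have hr0 : 0 < r := mul_pos ht0 (norm_pos_iff.2 hy)
    have hφα : ‖t • y + α • x‖ = r := by
      have h1 := hmin_α (-α)
      have h2 := hmin_0 α
      rw [show α + -α = (0:ℝ) by ring] at h1
      rw [show t • y + (0:ℝ) • x = t • y by module] at h1
      rw [norm_smul, Real.norm_eq_abs, abs_of_pos ht0] at h1
      exact le_antisymm (h1.trans (le_of_eq rfl)) h2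
    have hφ0 : ‖t • y‖ = r := by rw [norm_smul, Real.norm_eq_abs, abs_of_pos ht0]
    have hmid : ‖t • y + (α/2) • x‖ = r := by
      have hup : ‖t • y + (α/2) • x‖ ≤ r := by
        have e : t • y + (α/2) • x = (2:ℝ)⁻¹ • (t • y) + (2:ℝ)⁻¹ • (t • y + α • x) := by
          match_scalars <;> ring
        rw [e]
        refine (norm_add_le _ _).trans ?_
        rw [norm_smul ((2:ℝ)⁻¹) (t • y), norm_smul ((2:ℝ)⁻¹) (t • y + α • x), hφ0, hφα,
          norm_inv, Real.norm_ofNat]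
        linarith
      exact le_antisymm hup (hmin_0 (α/2))
    set u₁ : X := r⁻¹ • (t • y) with hu₁
    set u₂ : X := r⁻¹ • (t • y + α • x) with hu₂
    have hn1 : ‖u₁‖ = 1 := by
      rw [hu₁, norm_smul, norm_inv, Real.norm_eq_abs, abs_of_pos hr0, hφ0,
        inv_mul_cancel₀ (ne_of_gt hr0)]
    have hn2 : ‖u₂‖ = 1 := by
      rw [hu₂, norm_smul, norm_inv, Real.norm_eq_abs, abs_of_pos hr0, hφα,
        inv_mul_cancel₀ (ne_of_gt hr0)]
    have hsum : ‖u₁ + u₂‖ = 2 := by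
      have e : u₁ + u₂ = (2 * r⁻¹) • (t • y + (α/2) • x) := by
        rw [hu₁, hu₂]; match_scalars <;> ring
      rw [e, norm_smul, hmid, Real.norm_eq_abs, abs_of_pos (by positivity : (0:ℝ) < 2 * r⁻¹)]
      field_simp
    have := hSC u₁ u₂ hn1 hn2 hsum
    rw [hu₁, hu₂] at this
    have hax : α • x = 0 := by
      have h3 : t • y = t • y + α • x :=
        smul_right_injective X (inv_ne_zero (ne_of_gt hr0)) this
      exact left_eq_add.1 h3
    rcases smul_eq_zero.1 hax with h | h
    · exact hα0 h
    · exact hx h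
  have e0 : ‖x + t • y‖ = ‖x - t • y‖ := by
    have := hFα
    rw [hα0] at this
    rw [show (1+(0:ℝ)) • x + t • y = x + t • y by module,
        show (1-(0:ℝ)) • x - t • y = x - t • y by module] at this
    exact this
  exact e0

/-- Homogeneity of isosceles orthogonality. -/
lemma BT_homog
    (hIB : ∀ p q : X, ‖p + q‖ = ‖p - q‖ → ∀ t : ℝ, ‖p‖ ≤ ‖p + t • q‖)
    (hSC : ∀ u₁ u₂ : X, ‖u₁‖ = 1 → ‖u₂‖ = 1 → ‖u₁ + u₂‖ = 2 → u₁ = u₂)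
    (x y : X) (hxy : ‖x + y‖ = ‖x - y‖) :
    ∀ t : ℝ, ‖x + t • y‖ = ‖x - t • y‖ := by
  intro t
  by_cases hx : x = 0
  · rw [hx, zero_add, zero_sub, norm_neg]
  by_cases hy : y = 0
  · rw [hy, smul_zero, add_zero, sub_zero]
  have main_pos : ∀ s : ℝ, 0 < s → ‖x + s • y‖ = ‖x - s • y‖ := by
    intro s hs
    rcases le_or_gt (s * ‖y‖) ‖x‖ with hc | hc
    · exact BT_homog_core hIB hSC x y hx hy hxy s hs hc
    · have hyx : ‖y + x‖ = ‖y - x‖ := by rw [add_comm, norm_sub_rev]; exact hxy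
      have hb : (1/s) * ‖x‖ ≤ ‖y‖ := by
        rw [div_mul_eq_mul_div, one_mul, div_le_iff₀ hs, mul_comm]
        exact le_of_lt hc
      have h2 := BT_homog_core hIB hSC y x hy hx hyx (1/s) (by positivity) hb
      have e1 : s • (y + (1/s) • x) = x + s • y := by
        match_scalars <;> field_simp
      have e2 : s • (y - (1/s) • x) = -(x - s • y) := by
        match_scalars <;> (field_simp; try ring)
      calc ‖x + s • y‖ = ‖s • (y + (1/s) • x)‖ := by rw [e1]
        _ = s * ‖y + (1/s) • x‖ := by rw [norm_smul, Real.norm_eq_abs, abs_of_pos hs]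
        _ = s * ‖y - (1/s) • x‖ := by rw [h2]
        _ = ‖s • (y - (1/s) • x)‖ := by rw [norm_smul, Real.norm_eq_abs, abs_of_pos hs]
        _ = ‖x - s • y‖ := by rw [e2, norm_neg]
  rcases lt_trichotomy t 0 with htn | hte | htp
  · have e1 : x + t • y = x - (-t) • y := by module
    have e2 : x - t • y = x + (-t) • y := by module
    rw [e1, e2]
    exact (main_pos (-t) (by linarith)).symm
  · rw [hte, zero_smul, add_zero, sub_zero]
  · exact main_pos t htp

/-- The norm is Euclidean in the basis of a unit isosceles-orthogonal pair. -/
lemma BT_euclid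
    (hIB : ∀ p q : X, ‖p + q‖ = ‖p - q‖ → ∀ t : ℝ, ‖p‖ ≤ ‖p + t • q‖)
    (hH : ∀ x y : X, ‖x + y‖ = ‖x - y‖ → ∀ t : ℝ, ‖x + t • y‖ = ‖x - t • y‖)
    (p q : X) (hp : ‖p‖ = 1) (hq : ‖q‖ = 1) (hpq : ‖p + q‖ = ‖p - q‖) :
    ∀ a b : ℝ, ‖a • p + b • q‖ = Real.sqrt (a^2 + b^2) := by
  have E1 : ∀ a b : ℝ, ‖a • p + b • q‖ = ‖a • p - b • q‖ := by
    intro a b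
    by_cases ha : a = 0
    · rw [ha, zero_smul, zero_add, zero_sub, norm_neg]
    · have h := hH p q hpq (b/a)
      have e1 : a • (p + (b/a) • q) = a • p + b • q := by
        match_scalars <;> field_simp
      have e2 : a • (p - (b/a) • q) = a • p - b • q := by
        match_scalars <;> (field_simp; try ring)
      rw [← e1, ← e2, norm_smul, norm_smul, h]
  have E2 : ∀ a b : ℝ, ‖a • p + b • q‖ = ‖(-a) • p + b • q‖ := by
    intro a b
    by_cases hb : b = 0
    · rw [hb, zero_smul, add_zero, add_zero, neg_smul, norm_neg]
    · have hqp : ‖q + p‖ = ‖q - p‖ := by rw [add_comm, norm_sub_rev]; exact hpq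
      have h := hH q p hqp (a/b)
      have e1 : b • (q + (a/b) • p) = a • p + b • q := by
        match_scalars <;> (field_simp; try ring)
      have e2 : b • (q - (a/b) • p) = (-a) • p + b • q := by
        match_scalars <;> (field_simp; try ring)
      rw [← e1, ← e2, norm_smul, norm_smul, h]
  have hPQiso : ‖(p+q) + (p-q)‖ = ‖(p+q) - (p-q)‖ := by
    rw [show (p+q) + (p-q) = (2:ℝ) • p by module, show (p+q) - (p-q) = (2:ℝ) • q by module,
      norm_smul, norm_smul, hp, hq]
  have SWAP : ∀ a b : ℝ, ‖a • p + b • q‖ = ‖b • p + a • q‖ := by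
    intro a b
    by_cases hab : a + b = 0
    · have hba : b = -a := by linarith
      rw [hba, show ((-a) • p + a • q : X) = -(a • p + (-a) • q) by module, norm_neg]
    · have h := hH (p+q) (p-q) hPQiso ((a-b)/(a+b))
      have e1 : ((a+b)/2) • ((p+q) + ((a-b)/(a+b)) • (p-q)) = a • p + b • q := by
        match_scalars <;> (field_simp; ring)
      have e2 : ((a+b)/2) • ((p+q) - ((a-b)/(a+b)) • (p-q)) = b • p + a • q := by
        match_scalars <;> (field_simp; ring)
      rw [← e1, ← e2, norm_smul, norm_smul, h]
  set m : ℝ → X := fun θ => Real.cos θ • p + Real.sin θ • q with hm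
  have KEY : ∀ θ : ℝ, ‖m θ + ((-Real.sin θ) • p + Real.cos θ • q)‖
      = ‖m θ - ((-Real.sin θ) • p + Real.cos θ • q)‖ := by
    intro θ
    rw [hm]; dsimp only
    rw [show (Real.cos θ • p + Real.sin θ • q) + ((-Real.sin θ) • p + Real.cos θ • q)
        = (Real.cos θ - Real.sin θ) • p + (Real.sin θ + Real.cos θ) • q by module,
      show (Real.cos θ • p + Real.sin θ • q) - ((-Real.sin θ) • p + Real.cos θ • q)
        = (Real.cos θ + Real.sin θ) • p + (Real.sin θ - Real.cos θ) • q by module]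
    calc ‖(Real.cos θ - Real.sin θ) • p + (Real.sin θ + Real.cos θ) • q‖
        = ‖(Real.sin θ + Real.cos θ) • p + (Real.cos θ - Real.sin θ) • q‖ := SWAP _ _
      _ = ‖(Real.sin θ + Real.cos θ) • p - (Real.cos θ - Real.sin θ) • q‖ := E1 _ _
      _ = ‖(Real.cos θ + Real.sin θ) • p + (Real.sin θ - Real.cos θ) • q‖ := by
          congr 1; module
  have COS : ∀ θ φ : ℝ, |Real.cos φ| * ‖m θ‖ ≤ ‖m (θ+φ)‖ := by
    intro θ φ
    by_cases hc : Real.cos φ = 0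
    · rw [hc, abs_zero, zero_mul]; exact norm_nonneg _
    · have e : m (θ+φ) = Real.cos φ • (m θ + (Real.sin φ/Real.cos φ) •
          ((-Real.sin θ) • p + Real.cos θ • q)) := by
        rw [hm]; dsimp only
        rw [Real.cos_add, Real.sin_add]
        match_scalars <;> (field_simp <;> ring)
      rw [e, norm_smul, Real.norm_eq_abs]
      exact mul_le_mul_of_nonneg_left
        (hIB (m θ) ((-Real.sin θ) • p + Real.cos θ • q) (KEY θ) (Real.sin φ/Real.cos φ))
        (abs_nonneg _)
  have iter : ∀ (θ δ : ℝ) (n : ℕ), |Real.cos δ|^n * ‖m θ‖ ≤ ‖m (θ + n*δ)‖ := by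
    intro θ δ n
    induction n with
    | zero => simp
    | succ n ih =>
      have e : θ + ((n:ℕ)+1 : ℕ)*δ = (θ + n*δ) + δ := by push_cast; ring
      rw [e]
      calc |Real.cos δ|^(n+1) * ‖m θ‖ = |Real.cos δ| * (|Real.cos δ|^n * ‖m θ‖) := by ring
        _ ≤ |Real.cos δ| * ‖m (θ + n*δ)‖ := by
            exact mul_le_mul_of_nonneg_left ih (abs_nonneg _)
        _ ≤ ‖m ((θ + n*δ) + δ)‖ := COS _ δ
  have mono : ∀ θ₁ θ₂ : ℝ, ‖m θ₁‖ ≤ ‖m θ₂‖ := by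
    intro θ₁ θ₂
    set x : ℝ := θ₂ - θ₁ with hx
    have key : ∀ n : ℕ, 1 ≤ (n:ℝ) → |x| ≤ (n:ℝ) →
        (1 - x^2/(2*n)) * ‖m θ₁‖ ≤ ‖m θ₂‖ := by
      intro n hn1 hnx
      have hn0 : (0:ℝ) < n := by linarith
      have hδ := iter θ₁ (x/n) n
      rw [show θ₁ + (n:ℝ)*(x/n) = θ₂ by field_simp; rw [hx]; ring] at hδ
      refine le_trans (mul_le_mul_of_nonneg_right ?_ (norm_nonneg _)) hδ
      have ht2 : (x/(n:ℝ))^2 ≤ 1 := by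
        rw [div_pow, div_le_one (by positivity)]
        nlinarith [abs_nonneg x, sq_abs x]
      have hcge : 1 - (x/n)^2/2 ≤ |Real.cos (x/n)| :=
        le_trans Real.one_sub_sq_div_two_le_cos (le_abs_self _)
      have hbase0 : (0:ℝ) ≤ 1 - (x/n)^2/2 := by linarith
      have hB := one_add_mul_le_pow (show (-2:ℝ) ≤ -(x/n)^2/2 by nlinarith) n
      have heq : 1 + (n:ℝ) * (-(x/(n:ℝ))^2/2) = 1 - x^2/(2*n) := by
        field_simp
        ring
      calc 1 - x^2/(2*(n:ℝ)) = 1 + (n:ℝ) * (-(x/(n:ℝ))^2/2) := heq.symm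
        _ ≤ (1 + (-(x/(n:ℝ))^2/2))^n := hB
        _ = (1 - (x/(n:ℝ))^2/2)^n := by ring_nf
        _ ≤ |Real.cos (x/n)|^n := pow_le_pow_left₀ hbase0 hcge n
    refine le_of_forall_pos_le_add ?_
    intro ε hε
    obtain ⟨n, hn⟩ := exists_nat_ge (max (max 1 |x|) (x^2 * ‖m θ₁‖ / (2*ε)))
    have hn1 : (1:ℝ) ≤ n := le_trans (le_trans (le_max_left 1 |x|) (le_max_left _ _)) hn
    have hnx : |x| ≤ (n:ℝ) := le_trans (le_trans (le_max_right 1 |x|) (le_max_left _ _)) hn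
    have hnb : x^2 * ‖m θ₁‖ / (2*ε) ≤ (n:ℝ) := le_trans (le_max_right _ _) hn
    have hn0 : (0:ℝ) < n := by linarith
    have hk := key n hn1 hnx
    have hsmall : x^2 * ‖m θ₁‖ / (2*(n:ℝ)) ≤ ε := by
      rw [div_le_iff₀ (by positivity)]
      rw [div_le_iff₀ (by positivity : (0:ℝ) < 2*ε)] at hnb
      linarith
    have hexp : (1 - x^2/(2*(n:ℝ))) * ‖m θ₁‖ = ‖m θ₁‖ - x^2 * ‖m θ₁‖/(2*(n:ℝ)) := by
      ring
    rw [hexp] at hk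
    linarith
  have hm0 : ‖m 0‖ = 1 := by
    rw [hm]; dsimp only
    rw [Real.cos_zero, Real.sin_zero, one_smul, zero_smul, add_zero, hp]
  have rconst : ∀ θ : ℝ, ‖m θ‖ = 1 := fun θ =>
    le_antisymm (hm0 ▸ mono θ 0) (hm0 ▸ mono 0 θ)
  intro a b
  by_cases hab : a = 0 ∧ b = 0
  · rw [hab.1, hab.2]
    simp
  · set z : ℂ := ⟨a, b⟩ with hz
    have hz0 : z ≠ 0 := by
      intro h
      exact hab ⟨congrArg Complex.re h, congrArg Complex.im h⟩
    set r : ℝ := ‖z‖ with hr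
    have hrv : r = Real.sqrt (a^2 + b^2) := by
      rw [hr, Complex.norm_def, Complex.normSq_apply]
      norm_num [hz, sq]
    have hr0 : 0 < r := norm_pos_iff.mpr hz0
    have hcos : Real.cos z.arg = a / r := Complex.cos_arg hz0
    have hsin : Real.sin z.arg = b / r := Complex.sin_arg z
    have e : a • p + b • q = r • m z.arg := by
      rw [hm]; dsimp only
      rw [hcos, hsin]
      match_scalars <;> field_simp
    rw [e, norm_smul, rconst, mul_one, Real.norm_eq_abs, abs_of_pos hr0, hrv]

end BTsec

/-- Let `X` be a two-dimensional real normed space in which, for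
every pair of distinct unit vectors `x, y`, the vector `x + y` is Birkhoff orthogonal
to `x − y` (i.e. `‖(x + y) + t (x − y)‖ ≥ ‖x + y‖` for all `t ∈ ℝ`). Then `X` is
Euclidean: its norm satisfies the parallelogram law. -/
theorem birkhoff_thales_implies_euclidean (X : Type*) [NormedAddCommGroup X]
    [NormedSpace ℝ X] (hdim : Module.finrank ℝ X = 2)
    (hbirkhoff : ∀ x y : X, ‖x‖ = 1 → ‖y‖ = 1 → x ≠ y →
      ∀ t : ℝ, ‖(x + y) + t • (x - y)‖ ≥ ‖x + y‖) :
    ∀ u v : X, ‖u + v‖ ^ 2 + ‖u - v‖ ^ 2 = 2 * ‖u‖ ^ 2 + 2 * ‖v‖ ^ 2 := by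
  -- Step 1: isosceles orthogonality implies Birkhoff orthogonality
  have hIB : ∀ p q : X, ‖p + q‖ = ‖p - q‖ → ∀ t : ℝ, ‖p‖ ≤ ‖p + t • q‖ := by
    intro p q hpq t
    by_cases hq : q = 0
    · rw [hq, smul_zero, add_zero]
    by_cases hr : ‖p + q‖ = 0
    · have hpq0 : p + q = 0 := norm_eq_zero.1 hr
      have hmq0 : p - q = 0 := norm_eq_zero.1 (by rw [← hpq]; exact hr)
      have hp0 : p = 0 := by
        have h2 : (2:ℝ) • p = 0 := by
          rw [show (2:ℝ) • p = (p + q) + (p - q) by module, hpq0, hmq0, add_zero]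
        rcases smul_eq_zero.1 h2 with h | h
        · norm_num at h
        · exact h
      rw [hp0, zero_add, norm_zero]
      exact norm_nonneg _
    · set r : ℝ := ‖p + q‖ with hrdef
      have hr0 : 0 < r := lt_of_le_of_ne (norm_nonneg _) (Ne.symm hr)
      set x : X := r⁻¹ • (p + q) with hxdef
      set y : X := r⁻¹ • (p - q) with hydef
      have hx1 : ‖x‖ = 1 := by
        rw [hxdef, norm_smul, norm_inv, Real.norm_eq_abs, abs_of_pos hr0,
          inv_mul_cancel₀ (ne_of_gt hr0)]
      have hy1 : ‖y‖ = 1 := by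
        rw [hydef, norm_smul, norm_inv, Real.norm_eq_abs, abs_of_pos hr0, ← hpq,
          inv_mul_cancel₀ (ne_of_gt hr0)]
      have hxy : x ≠ y := by
        intro h
        have h2 : x - y = 0 := sub_eq_zero.2 h
        rw [hxdef, hydef, show r⁻¹ • (p + q) - r⁻¹ • (p - q) = (2*r⁻¹) • q by module] at h2
        rcases smul_eq_zero.1 h2 with h3 | h3
        · have : r⁻¹ ≠ 0 := inv_ne_zero (ne_of_gt hr0)
          rcases mul_eq_zero.1 h3 with h4 | h4
          · norm_num at h4
          · exact this h4
        · exact hq h3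
      have hb := hbirkhoff x y hx1 hy1 hxy t
      have ex : x + y = (2*r⁻¹) • p := by rw [hxdef, hydef]; module
      have ey : x - y = (2*r⁻¹) • q := by rw [hxdef, hydef]; module
      rw [ex, ey, show t • ((2*r⁻¹) • q) = (2*r⁻¹) • (t • q) by module,
        show (2*r⁻¹) • p + (2*r⁻¹) • (t • q) = (2*r⁻¹) • (p + t • q) by module,
        norm_smul, norm_smul] at hb
      have hpos : (0:ℝ) < ‖(2*r⁻¹ : ℝ)‖ := by
        rw [Real.norm_eq_abs]
        positivity
      exact le_of_mul_le_mul_left hb hpos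
  have hSC := BT_strict_conv hIB (fun p w hp hnz => BT_exists_isosceles p w hp hnz)
  have hH := BT_homog hIB hSC
  have hfd : FiniteDimensional ℝ X := FiniteDimensional.of_finrank_eq_succ hdim
  have hnt : Nontrivial X := Module.nontrivial_of_finrank_pos (R := ℝ) (by omega)
  obtain ⟨x0, hx0⟩ := exists_ne (0 : X)
  set p : X := ‖x0‖⁻¹ • x0 with hpdef
  have hx0n : (0:ℝ) < ‖x0‖ := norm_pos_iff.2 hx0
  have hp : ‖p‖ = 1 := by
    rw [hpdef, norm_smul, norm_inv, norm_norm, inv_mul_cancel₀ (ne_of_gt hx0n)]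
  have hp0 : p ≠ 0 := by intro h; rw [h, norm_zero] at hp; norm_num at hp
  have hw : ∃ w : X, ∀ k : ℝ, w ≠ k • p := by
    by_contra hcon
    push_neg at hcon
    have hsp : Submodule.span ℝ ({p} : Set X) = ⊤ := by
      rw [eq_top_iff]
      intro w _
      obtain ⟨k, hk⟩ := hcon w
      rw [hk]
      exact Submodule.smul_mem _ k (Submodule.mem_span_singleton_self p)
    have h1 := finrank_span_singleton (K := ℝ) hp0
    rw [hsp, finrank_top, hdim] at h1
    norm_num at h1
  obtain ⟨w, hw⟩ := hw
  have hnz : ∀ θ : ℝ, Real.cos θ • p + Real.sin θ • w ≠ 0 := by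
    intro θ h
    by_cases hs : Real.sin θ = 0
    · have hc : Real.cos θ ≠ 0 := by
        intro hc
        have := Real.sin_sq_add_cos_sq θ
        rw [hs, hc] at this
        norm_num at this
      rw [hs, zero_smul, add_zero] at h
      exact hp0 ((smul_eq_zero.1 h).resolve_left hc)
    · apply hw (-(Real.cos θ)/Real.sin θ)
      have h' : Real.sin θ • w = (-Real.cos θ) • p := by
        rw [neg_smul]
        exact eq_neg_of_add_eq_zero_right h
      calc w = (Real.sin θ)⁻¹ • (Real.sin θ • w) := by
            rw [smul_smul, inv_mul_cancel₀ hs, one_smul]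
        _ = (Real.sin θ)⁻¹ • ((-Real.cos θ) • p) := by rw [h']
        _ = (-(Real.cos θ)/Real.sin θ) • p := by
            rw [smul_smul]
            congr 1
            field_simp
  obtain ⟨q, hq1, hpq, -⟩ := BT_exists_isosceles p w hp hnz
  have EUC := BT_euclid hIB hH p q hp hq1 hpq
  have hli : LinearIndependent ℝ ![p, q] := by
    rw [LinearIndependent.pair_iff]
    intro s t hst
    have := EUC s t
    rw [hst, norm_zero] at this
    have h2 : s^2 + t^2 = 0 := by
      rw [← Real.sq_sqrt (show (0:ℝ) ≤ s^2+t^2 by positivity), ← this]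
      norm_num
    constructor <;> nlinarith [sq_nonneg s, sq_nonneg t]
  have hsp : Submodule.span ℝ (Set.range ![p, q]) = ⊤ :=
    hli.span_eq_top_of_card_eq_finrank (by simp [hdim])
  have hmem : ∀ u : X, ∃ a b : ℝ, a • p + b • q = u := by
    intro u
    have hu : u ∈ Submodule.span ℝ ({p, q} : Set X) := by
      have : Set.range ![p, q] = {p, q} := by
        rw [Matrix.range_cons, Matrix.range_cons, Matrix.range_empty]
        ext z
        simp
        tauto
      rw [← this, hsp]
      trivial
    exact Submodule.mem_span_pair.1 hu
  intro u v
  obtain ⟨a₁, b₁, hu⟩ := hmem u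
  obtain ⟨a₂, b₂, hv⟩ := hmem v
  have h1 : ‖u + v‖ = Real.sqrt ((a₁+a₂)^2 + (b₁+b₂)^2) := by
    rw [← hu, ← hv, show (a₁ • p + b₁ • q) + (a₂ • p + b₂ • q)
      = (a₁+a₂) • p + (b₁+b₂) • q by module]
    exact EUC _ _
  have h2 : ‖u - v‖ = Real.sqrt ((a₁-a₂)^2 + (b₁-b₂)^2) := by
    rw [← hu, ← hv, show (a₁ • p + b₁ • q) - (a₂ • p + b₂ • q)
      = (a₁-a₂) • p + (b₁-b₂) • q by module]
    exact EUC _ _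
  have h3 : ‖u‖ = Real.sqrt (a₁^2 + b₁^2) := by rw [← hu]; exact EUC _ _
  have h4 : ‖v‖ = Real.sqrt (a₂^2 + b₂^2) := by rw [← hv]; exact EUC _ _
  rw [h1, h2, h3, h4, Real.sq_sqrt (by positivity), Real.sq_sqrt (by positivity),
    Real.sq_sqrt (by positivity), Real.sq_sqrt (by positivity)]
  ring
end

section
/- Let X be a two-dimensional real normed space with unit sphere ∂B of perimeter L, let γ : ℝ → X be an arc-length parametrization of ∂B (i.e., γ has image ∂B, is L-periodic, and its arc length over every interval [s₁,s₂] equals s₂ − s₁), and let p = γ(0). For an integer n ≥ 2 define γ′(s) = ((n−1)/n) p + (1/n) γ(ns). Then: (i) the image of γ′ over [0, L/n] is the Minkowski circle of radius 1/n centered at ((n−1)/n) p; (ii) γ′(0) = p = γ(0); and (iii) γ′ is also parametrized by Minkowski arc length, i.e., for every 0 ≤ s₁ ≤ s₂ the arc length of γ′ over [s₁, s₂] equals s₂ − s₁. (Hence the inner circle γ′ rolls without slipping on the unit circle γ, producing a Minkowski hypocycloid.) -/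
open Set
open scoped ENNReal NNReal

private lemma evar_const_add_smul {X : Type*} [NormedAddCommGroup X] [NormedSpace ℝ X]
    (c : X) (a : ℝ) (ha : a ≠ 0) (g : ℝ → X) (s : Set ℝ) :
    eVariationOn (fun t => c + a • g t) s = (‖a‖₊ : ℝ≥0∞) * eVariationOn g s := by
  have h1 : LipschitzWith ‖a‖₊ (fun x : X => c + a • x) := by
    intro x y
    simp only [edist_add_left, edist_smul₀, ENNReal.smul_def, smul_eq_mul, le_refl]
  have h2 : LipschitzWith ‖a⁻¹‖₊ (fun x : X => a⁻¹ • (x - c)) := by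
    intro x y
    simp only [edist_sub_right, edist_smul₀, ENNReal.smul_def, smul_eq_mul, le_refl]
  have key : (‖a‖₊ : ℝ≥0) * ‖a⁻¹‖₊ = 1 := by
    rw [← nnnorm_mul, mul_inv_cancel₀ ha, nnnorm_one]
  have le1 : eVariationOn (fun t => c + a • g t) s ≤ (‖a‖₊ : ℝ≥0∞) * eVariationOn g s :=
    h1.lipschitzOnWith.comp_eVariationOn_le (Set.mapsTo_univ g s)
  have le2 : eVariationOn g s ≤ (‖a⁻¹‖₊ : ℝ≥0∞) * eVariationOn (fun t => c + a • g t) s := by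
    have : g = (fun x : X => a⁻¹ • (x - c)) ∘ (fun t => c + a • g t) := by
      funext t
      simp [add_sub_cancel_left, smul_smul, inv_mul_cancel₀ ha]
    nth_rewrite 1 [this]
    exact h2.lipschitzOnWith.comp_eVariationOn_le (Set.mapsTo_univ _ s)
  refine le_antisymm le1 ?_
  calc (‖a‖₊ : ℝ≥0∞) * eVariationOn g s
      ≤ (‖a‖₊ : ℝ≥0∞) * ((‖a⁻¹‖₊ : ℝ≥0∞) * eVariationOn (fun t => c + a • g t) s) :=
        mul_le_mul_right le2 _
    _ = ((‖a‖₊ * ‖a⁻¹‖₊ : ℝ≥0) : ℝ≥0∞) * eVariationOn (fun t => c + a • g t) s := by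
        rw [ENNReal.coe_mul, mul_assoc]
    _ = eVariationOn (fun t => c + a • g t) s := by rw [key, ENNReal.coe_one, one_mul]

/-- Let `X` be a Minkowski plane whose unit circle has perimeter `L`,
let `γ : ℝ → X` be an arc-length parametrization of the unit circle (image the unit
sphere, `L`-periodic, arc length of every interval `[s₁, s₂]` equal to `s₂ − s₁`),
and let `p = γ 0`. For an integer `n ≥ 2` let `γ' (s) = ((n−1)/n) p + (1/n) γ (n s)`.
Then: (i) the image of `γ'` over `[0, L/n]` is the Minkowski circle of radius `1/n`
centered at `((n−1)/n) p`; (ii) `γ' 0 = p`; and (iii) `γ'` is parametrized by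
Minkowski arc length. Hence `γ'` rolls without slipping on the unit circle,
producing a Minkowski hypocycloid. -/
theorem minkowski_hypocycloid_rolling (X : Type*) [NormedAddCommGroup X]
    [NormedSpace ℝ X] (hdim : Module.finrank ℝ X = 2)
    (L : ℝ) (hL : 0 < L) (γ : ℝ → X)
    (hrange : Set.range γ = Metric.sphere (0 : X) 1)
    (hper : ∀ s : ℝ, γ (s + L) = γ s)
    (harc : ∀ s₁ s₂ : ℝ, s₁ ≤ s₂ →
      eVariationOn γ (Set.Icc s₁ s₂) = ENNReal.ofReal (s₂ - s₁))
    (n : ℕ) (hn : 2 ≤ n) :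
    (fun s : ℝ => ((n - 1 : ℝ) / n) • γ 0 + ((1 : ℝ) / n) • γ (n * s)) ''
        Set.Icc 0 (L / n)
        = Metric.sphere (((n - 1 : ℝ) / n) • γ 0) (1 / n) ∧
      ((n - 1 : ℝ) / n) • γ 0 + ((1 : ℝ) / n) • γ (n * 0) = γ 0 ∧
      ∀ s₁ s₂ : ℝ, 0 ≤ s₁ → s₁ ≤ s₂ →
        eVariationOn (fun s : ℝ => ((n - 1 : ℝ) / n) • γ 0 + ((1 : ℝ) / n) • γ (n * s))
            (Set.Icc s₁ s₂)
          = ENNReal.ofReal (s₂ - s₁) := by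
  have hn0 : (0 : ℝ) < n := by exact_mod_cast Nat.lt_of_lt_of_le Nat.zero_lt_two hn
  have hn0' : (n : ℝ) ≠ 0 := hn0.ne'
  have hper' : Function.Periodic γ L := hper
  -- every point of the sphere is hit by γ on [0, L)
  have hhit : ∀ x ∈ Metric.sphere (0 : X) 1, ∃ t ∈ Set.Ico (0:ℝ) L, γ t = x := by
    intro x hx
    rw [← hrange] at hx
    obtain ⟨t, ht⟩ := hx
    refine ⟨toIcoMod hL 0 t, toIcoMod_mem_Ico' hL t, ?_⟩
    rw [toIcoMod, Function.Periodic.sub_zsmul_eq hper', ht]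
  have hsphere : ∀ t : ℝ, γ t ∈ Metric.sphere (0 : X) 1 := by
    intro t; rw [← hrange]; exact ⟨t, rfl⟩
  refine ⟨?_, ?_, ?_⟩
  · -- (i)
    ext y
    simp only [Set.mem_image, Metric.mem_sphere]
    constructor
    · rintro ⟨s, _, rfl⟩
      have h1 : ‖γ (n * s)‖ = 1 := by
        simpa using hsphere (n * s)
      rw [dist_eq_norm, add_sub_cancel_left, norm_smul, h1]
      simp [abs_of_nonneg (by positivity : (0:ℝ) ≤ 1 / n)]
    · intro hy
      set c := ((n - 1 : ℝ) / n) • γ 0 with hc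
      have hx : (n : ℝ) • (y - c) ∈ Metric.sphere (0 : X) 1 := by
        rw [Metric.mem_sphere, dist_zero_right, norm_smul,
          Real.norm_natCast]
        rw [dist_eq_norm] at hy
        rw [hy]
        field_simp
      obtain ⟨t, ht, hgt⟩ := hhit _ hx
      refine ⟨t / n, ⟨div_nonneg ht.1 hn0.le, ?_⟩, ?_⟩
      · rw [div_le_div_iff_of_pos_right hn0] at *
        exact le_of_lt ht.2
      · have : (n : ℝ) * (t / n) = t := by field_simp
        rw [this, hgt, smul_smul]
        have : (1 : ℝ) / n * n = 1 := by field_simp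
        rw [this, one_smul]
        abel
  · -- (ii)
    rw [mul_zero, ← add_smul]
    have : (n - 1 : ℝ) / n + 1 / n = 1 := by field_simp; ring
    rw [this, one_smul]
  · -- (iii)
    intro s₁ s₂ _ h12
    have hmono : MonotoneOn (fun t : ℝ => (n : ℝ) * t) (Set.Icc s₁ s₂) := by
      intro a _ b _ hab
      exact mul_le_mul_of_nonneg_left hab hn0.le
    have himg : (fun t : ℝ => (n : ℝ) * t) '' Set.Icc s₁ s₂
        = Set.Icc ((n : ℝ) * s₁) ((n : ℝ) * s₂) := by
      ext x
      simp only [Set.mem_image, Set.mem_Icc]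
      constructor
      · rintro ⟨t, ⟨h1, h2⟩, rfl⟩
        exact ⟨mul_le_mul_of_nonneg_left h1 hn0.le, mul_le_mul_of_nonneg_left h2 hn0.le⟩
      · intro ⟨h1, h2⟩
        refine ⟨x / n, ⟨?_, ?_⟩, by field_simp⟩
        · rw [le_div_iff₀ hn0, mul_comm]; exact h1
        · rw [div_le_iff₀ hn0, mul_comm]; exact h2
    have hcomp : eVariationOn (fun s : ℝ => γ (n * s)) (Set.Icc s₁ s₂)
        = ENNReal.ofReal ((n : ℝ) * s₂ - (n : ℝ) * s₁) := by
      have := eVariationOn.comp_eq_of_monotoneOn γ (fun t : ℝ => (n : ℝ) * t) hmono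
      rw [Function.comp_def] at this
      rw [this, himg, harc _ _ (mul_le_mul_of_nonneg_left h12 hn0.le)]
    rw [evar_const_add_smul (((n - 1 : ℝ) / n) • γ 0) ((1:ℝ)/n)
      (by positivity : (1:ℝ)/n ≠ 0) (fun s : ℝ => γ (n * s)) (Set.Icc s₁ s₂), hcomp]
    have hnn : ((‖(1:ℝ)/n‖₊ : ℝ≥0) : ℝ≥0∞) = ENNReal.ofReal (1 / n) := by
      rw [← ENNReal.ofReal_coe_nnreal, coe_nnnorm, Real.norm_eq_abs,
        abs_of_nonneg (by positivity : (0:ℝ) ≤ 1 / n)]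
    rw [hnn, ← ENNReal.ofReal_mul (by positivity : (0:ℝ) ≤ 1 / n)]
    congr 1
    field_simp
end
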